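/- arXiv:2207.14717 — 3 statements merged into one kernel-verified Lean document; each statement's English description precedes it below -/
import Mathlib

section
/- Let γ > 0 be a real number, let t ≤ n be natural numbers, and let p_K : ℕ → ℝ be nonnegative and summable with p_K(0) = 0. Define V_m(s) = Σ_{k=1}^∞ (k · (k−1) · ⋯ · (k−s+1)) · p_K(k) / ∏_{j=0}^{m−1} (γk + j) for natural numbers s ≤ m (falling factorial interpreted as 0 when s > k). Then the recurrence V_n(t) = γ · V_{n+1}(t+1) + (γ·t + n) · V_{n+1}(t) holds. -/
/-- For γ > 0, naturals t ≤ n, and a nonnegative summable prior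
`pK` with `pK 0 = 0`, the coefficients
`V m s = Σ_{k=1}^∞ k_(s) · pK k / ∏_{j=0}^{m-1} (γk + j)` (for s ≤ m)
satisfy the recurrence `V n t = γ · V (n+1) (t+1) + (γ·t + n) · V (n+1) t`. -/
theorem mfm_V_recurrence (γ : ℝ) (hγ : 0 < γ) (t n : ℕ) (htn : t ≤ n)
    (pK : ℕ → ℝ) (hpK_nonneg : ∀ k, 0 ≤ pK k) (hpK_summable : Summable pK)
    (hpK_zero : pK 0 = 0)
    (V : ℕ → ℕ → ℝ)
    (hV : ∀ m s : ℕ, s ≤ m → V m s = ∑' k : {k : ℕ // 1 ≤ k},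
      (Nat.descFactorial k.1 s : ℝ) * pK k.1 / ∏ j ∈ Finset.range m, (γ * k.1 + j)) :
    V n t = γ * V (n + 1) (t + 1) + (γ * t + n) * V (n + 1) t := by
  have hsub : Summable (fun k : {k : ℕ // 1 ≤ k} => pK k.1) := hpK_summable.subtype _
  have hprodpos : ∀ (m : ℕ) (k : {k : ℕ // 1 ≤ k}),
      (0:ℝ) < ∏ j ∈ Finset.range m, (γ * k.1 + j) := by
    intro m k
    apply Finset.prod_pos
    intro j _
    have hk1 : (1:ℝ) ≤ (k.1:ℝ) := by exact_mod_cast k.2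
    have : (0:ℝ) ≤ j := Nat.cast_nonneg j
    nlinarith
  have key : ∀ m s : ℕ, s ≤ m →
      Summable (fun k : {k : ℕ // 1 ≤ k} =>
        (Nat.descFactorial k.1 s : ℝ) * pK k.1 / ∏ j ∈ Finset.range m, (γ * k.1 + j)) := by
    intro m s hsm
    apply Summable.of_nonneg_of_le ?_ ?_ (hsub.mul_left (γ ^ m)⁻¹)
    · intro k
      exact div_nonneg (mul_nonneg (Nat.cast_nonneg _) (hpK_nonneg _)) (hprodpos m k).le
    · intro k
      have hk1 : (1:ℝ) ≤ (k.1:ℝ) := by exact_mod_cast k.2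
      have hkpos : (0:ℝ) < (k.1:ℝ) := by linarith
      have hprod : γ ^ m * (k.1:ℝ) ^ s ≤ ∏ j ∈ Finset.range m, (γ * k.1 + j) := by
        calc γ ^ m * (k.1:ℝ) ^ s ≤ γ ^ m * (k.1:ℝ) ^ m := by
              apply mul_le_mul_of_nonneg_left (pow_le_pow_right₀ hk1 hsm) (by positivity)
          _ = ∏ j ∈ Finset.range m, (γ * k.1) := by
              rw [Finset.prod_const, Finset.card_range, mul_pow]
          _ ≤ _ := Finset.prod_le_prod (fun j _ => by positivity)
              (fun j _ => by have : (0:ℝ) ≤ j := Nat.cast_nonneg j; linarith)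
      have hdf : (Nat.descFactorial k.1 s : ℝ) ≤ (k.1:ℝ) ^ s := by
        exact_mod_cast Nat.descFactorial_le_pow k.1 s
      have h1 : (Nat.descFactorial k.1 s : ℝ) * pK k.1 / ∏ j ∈ Finset.range m, (γ * k.1 + j)
          ≤ (k.1:ℝ) ^ s * pK k.1 / (γ ^ m * (k.1:ℝ) ^ s) := by
        apply div_le_div₀ (mul_nonneg (by positivity) (hpK_nonneg _))
          (mul_le_mul_of_nonneg_right hdf (hpK_nonneg _)) (by positivity) hprod
      refine h1.trans (le_of_eq ?_)
      field_simp
  rw [hV n t htn, hV (n+1) (t+1) (by omega), hV (n+1) t (by omega)]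
  rw [← tsum_mul_left, ← tsum_mul_left,
    ← Summable.tsum_add ((key (n+1) (t+1) (by omega)).mul_left γ)
      ((key (n+1) t (by omega)).mul_left (γ * t + n))]
  apply tsum_congr
  intro k
  have hk1 : (1:ℝ) ≤ (k.1:ℝ) := by exact_mod_cast k.2
  have hP : (0:ℝ) < ∏ j ∈ Finset.range n, (γ * k.1 + j) := hprodpos n k
  have hlast : (0:ℝ) < γ * k.1 + n := by
    have : (0:ℝ) ≤ n := Nat.cast_nonneg n
    nlinarith
  have hsucc : ∏ j ∈ Finset.range (n+1), (γ * k.1 + j)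
      = (∏ j ∈ Finset.range n, (γ * k.1 + j)) * (γ * k.1 + n) := by
    rw [Finset.prod_range_succ]
  have hkey : γ * (Nat.descFactorial k.1 (t+1) : ℝ) + (γ * t + n) * (Nat.descFactorial k.1 t : ℝ)
      = (Nat.descFactorial k.1 t : ℝ) * (γ * k.1 + n) := by
    rcases le_or_gt t k.1 with h | h
    · have : (Nat.descFactorial k.1 (t+1) : ℝ) = ((k.1:ℝ) - t) * (Nat.descFactorial k.1 t : ℝ) := by
        rw [Nat.descFactorial_succ]
        push_cast [Nat.cast_sub h]
        ring
      rw [this]; ring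
    · have h1 : Nat.descFactorial k.1 t = 0 := Nat.descFactorial_eq_zero_iff_lt.mpr h
      have h2 : Nat.descFactorial k.1 (t+1) = 0 :=
        Nat.descFactorial_eq_zero_iff_lt.mpr (by omega)
      rw [h1, h2]; push_cast; ring
  rw [hsucc]
  have e1 : γ * ((Nat.descFactorial k.1 (t+1) : ℝ) * pK k.1 /
        ((∏ j ∈ Finset.range n, (γ * k.1 + j)) * (γ * k.1 + n)))
      + (γ * t + n) * ((Nat.descFactorial k.1 t : ℝ) * pK k.1 /
        ((∏ j ∈ Finset.range n, (γ * k.1 + j)) * (γ * k.1 + n)))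
      = (γ * (Nat.descFactorial k.1 (t+1) : ℝ) + (γ * t + n) * (Nat.descFactorial k.1 t : ℝ))
        * pK k.1 / ((∏ j ∈ Finset.range n, (γ * k.1 + j)) * (γ * k.1 + n)) := by
    ring
  rw [e1, hkey]
  rw [show ((Nat.descFactorial k.1 t : ℝ) * (γ * k.1 + n)) * pK k.1
      = ((Nat.descFactorial k.1 t : ℝ) * pK k.1) * (γ * k.1 + n) from by ring]
  rw [mul_div_mul_right _ _ (ne_of_gt hlast)]
end

section
/- Let γ > 0 be a real number, let t ≤ n be natural numbers with n ≥ 1, let p_K : ℕ → ℝ be nonnegative and summable with p_K(0) = 0, and define V_m(s) = Σ_{k=1}^∞ (k·(k−1)⋯(k−s+1)) · p_K(k) / ∏_{j=0}^{m−1}(γk + j). Let n_1, …, n_t be natural numbers with n_1 + ⋯ + n_t = n, and write γ^{(m)} = ∏_{i=0}^{m−1}(γ + i) for the rising factorial. Then the exchangeable partition probability function q(n_1,…,n_t) = V_n(t) · ∏_{c=1}^t γ^{(n_c)} satisfies the consistency identity: V_n(t) · ∏_{c=1}^t γ^{(n_c)} = Σ_{c=1}^t [ V_{n+1}(t) ·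 (γ + n_c) · ∏_{c'=1}^t γ^{(n_{c'})} ] + γ · V_{n+1}(t+1) · ∏_{c'=1}^t γ^{(n_{c'})}. Equivalently, the probability of a partition of n items with block sizes (n_1,…,n_t) equals the sum over all ways to extend it by an (n+1)-st item (added to an existing block c, changing n_c to n_c + 1, or placed in a new singleton block) of the probabilities of the extended partitions. -/
/-- Consistency of the exchangeable partition probability
function of the mixture of finite mixtures model.  With γ > 0, t ≤ n, n ≥ 1,
`pK` nonnegative summable with `pK 0 = 0`,
`V m s = Σ_{k=1}^∞ k_(s) · pK k / ∏_{j=0}^{m-1} (γk + j)`,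
block sizes `ν : Fin t → ℕ` summing to n, and the rising factorial
`γ^{(m)} = ∏_{i=0}^{m-1} (γ + i)`, the partition probability
`V n t · ∏_c γ^{(ν c)}` equals the sum of the probabilities of all one-item
extensions: adding the new item to an existing block c (factor γ + ν c) or to
a new singleton block (factor γ, with V (n+1) (t+1)). -/
theorem mfm_eppf_consistency (γ : ℝ) (hγ : 0 < γ) (t n : ℕ) (htn : t ≤ n) (hn : 1 ≤ n)
    (pK : ℕ → ℝ) (hpK_nonneg : ∀ k, 0 ≤ pK k) (hpK_summable : Summable pK)
    (hpK_zero : pK 0 = 0)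
    (V : ℕ → ℕ → ℝ)
    (hV : ∀ m s : ℕ, s ≤ m → V m s = ∑' k : {k : ℕ // 1 ≤ k},
      (Nat.descFactorial k.1 s : ℝ) * pK k.1 / ∏ j ∈ Finset.range m, (γ * k.1 + j))
    (ν : Fin t → ℕ) (hν : ∑ c, ν c = n) :
    V n t * ∏ c, (∏ i ∈ Finset.range (ν c), (γ + i))
      = (∑ c, V (n + 1) t * (γ + ν c) * ∏ c', (∏ i ∈ Finset.range (ν c'), (γ + i)))
        + γ * V (n + 1) (t + 1) * ∏ c', (∏ i ∈ Finset.range (ν c'), (γ + i)) := by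
  -- positivity of partial products
  have hP : ∀ (m : ℕ) (k : {k : ℕ // 1 ≤ k}), 0 < ∏ j ∈ Finset.range m, (γ * k.1 + j) := by
    intro m k
    apply Finset.prod_pos
    intro j _
    have : (1:ℝ) ≤ k.1 := by exact_mod_cast k.2
    have : 0 < γ * k.1 := by nlinarith
    positivity
  -- summability
  have hsum : ∀ s : ℕ, s ≤ n + 1 → Summable (fun k : {k : ℕ // 1 ≤ k} =>
      (Nat.descFactorial k.1 s : ℝ) * pK k.1 / ∏ j ∈ Finset.range (n+1), (γ * k.1 + j)) := by
    intro s hs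
    have hsub : Summable (fun k : {k : ℕ // 1 ≤ k} => pK k.1) :=
      (hpK_summable.subtype _)
    apply Summable.of_nonneg_of_le (f := fun k : {k : ℕ // 1 ≤ k} => (γ ^ (n+1))⁻¹ * pK k.1)
    · intro k
      have := hP (n+1) k
      have := hpK_nonneg k.1
      positivity
    · intro k
      have hk1 : (1:ℝ) ≤ (k.1:ℝ) := by exact_mod_cast k.2
      have hnum : (Nat.descFactorial k.1 s : ℝ) ≤ (k.1:ℝ) ^ (n+1) := by
        calc (Nat.descFactorial k.1 s : ℝ) ≤ (k.1:ℝ) ^ s := by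
              exact_mod_cast Nat.descFactorial_le_pow k.1 s
          _ ≤ (k.1:ℝ) ^ (n+1) := pow_le_pow_right₀ hk1 hs
      have hden : (γ * k.1) ^ (n+1) ≤ ∏ j ∈ Finset.range (n+1), (γ * k.1 + j) := by
        calc (γ * k.1) ^ (n+1) = ∏ j ∈ Finset.range (n+1), (γ * k.1) := by
              rw [Finset.prod_const, Finset.card_range]
          _ ≤ _ := by
              apply Finset.prod_le_prod
              · intro j _; positivity
              · intro j _; have : (0:ℝ) ≤ j := Nat.cast_nonneg j; linarith
      have hdpos : (0:ℝ) < (γ * k.1) ^ (n+1) := by positivity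
      calc (Nat.descFactorial k.1 s : ℝ) * pK k.1 / ∏ j ∈ Finset.range (n+1), (γ * k.1 + j)
          ≤ (k.1:ℝ) ^ (n+1) * pK k.1 / (γ * k.1) ^ (n+1) := by
            apply div_le_div₀ (mul_nonneg (by positivity) (hpK_nonneg k.1)) _ hdpos hden
            exact mul_le_mul_of_nonneg_right hnum (hpK_nonneg k.1)
        _ = (γ ^ (n+1))⁻¹ * pK k.1 := by
            rw [mul_pow]
            field_simp
    · exact hsub.mul_left _
  -- key scalar identity
  have key : V n t = V (n+1) t * (γ * t + n) + γ * V (n+1) (t+1) := by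
    rw [hV n t htn, hV (n+1) t (by omega), hV (n+1) (t+1) (by omega)]
    have hg := hsum t (by omega)
    have hh := hsum (t+1) (by omega)
    have heq : ∀ k : {k : ℕ // 1 ≤ k},
        (Nat.descFactorial k.1 t : ℝ) * pK k.1 / ∏ j ∈ Finset.range n, (γ * k.1 + j)
        = ((Nat.descFactorial k.1 t : ℝ) * pK k.1 / ∏ j ∈ Finset.range (n+1), (γ * k.1 + j)) * (γ * t + n)
          + γ * ((Nat.descFactorial k.1 (t+1) : ℝ) * pK k.1 / ∏ j ∈ Finset.range (n+1), (γ * k.1 + j)) := by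
      intro k
      have hPn := hP n k
      have hfac : (0:ℝ) < γ * k.1 + n := by
        have : (1:ℝ) ≤ (k.1:ℝ) := by exact_mod_cast k.2
        nlinarith
      rw [Finset.prod_range_succ]
      have hdesc : (Nat.descFactorial k.1 (t+1) : ℝ)
          = ((k.1:ℝ) - t) * (Nat.descFactorial k.1 t : ℝ) := by
        rcases le_or_gt t k.1 with h | h
        · rw [Nat.descFactorial_succ]
          push_cast [Nat.cast_sub h]
          ring
        · have h1 : Nat.descFactorial k.1 t = 0 := Nat.descFactorial_eq_zero_iff_lt.mpr h
          have h2 : Nat.descFactorial k.1 (t+1) = 0 :=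
            Nat.descFactorial_eq_zero_iff_lt.mpr (by omega)
          simp [h1, h2]
      rw [hdesc]
      field_simp
      ring
    rw [tsum_congr heq, Summable.tsum_add (hg.mul_right _) (hh.mul_left _),
      tsum_mul_right, tsum_mul_left]
  rw [key, ← Finset.sum_mul]
  have hsum2 : ∑ c : Fin t, (V (n+1) t * (γ + ν c)) = V (n+1) t * (γ * t + n) := by
    rw [← Finset.mul_sum]
    congr 1
    have hcast : (∑ c : Fin t, (ν c : ℝ)) = n := by exact_mod_cast hν
    rw [Finset.sum_add_distrib, Finset.sum_const, Finset.card_univ, hcast]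
    simp [mul_comm]
  rw [hsum2]
  ring
end

section
/- Let γ > 0 be real, let t, n, M be natural numbers with n ≥ t + 2 and M ≥ 1. Then the tail of the series defining V_n(t) without prior weights satisfies Σ_{k=M}^∞ (k·(k−1)⋯(k−t+1)) / ∏_{j=0}^{n−1}(γk + j) ≤ γ^{−n} · ( M^{t−n} + M^{t−n+1} / (n − t − 1) ), where powers of M with negative integer exponents are real powers. In particular the truncation error of the series tends to 0 as M → ∞. -/
open Finset

lemma bern_step (x : ℝ) (hx : 1 ≤ x) (m : ℕ) (hm : 1 ≤ m) :
    1 / (x + 1) ^ (m + 1) ≤ (1 / x ^ m - 1 / (x + 1) ^ m) / m := by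
  obtain ⟨p, rfl⟩ : ∃ p, m = p + 1 := ⟨m - 1, by omega⟩
  have hx0 : (0:ℝ) < x := by linarith
  have hx1 : (0:ℝ) < x + 1 := by linarith
  have ha : (0:ℝ) < x ^ (p+1) := by positivity
  have hb : (0:ℝ) < (x+1) ^ (p+1) := by positivity
  have hber : 1 + ((p+1:ℕ):ℝ) * (1/x) ≤ (1 + 1/x) ^ (p+1) := by
    apply one_add_mul_le_pow
    have : (0:ℝ) < 1/x := by positivity
    linarith
  have key : x ^ (p+1) + ((p+1:ℕ):ℝ) * x ^ p ≤ (x+1) ^ (p+1) := by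
    have h2 : (1 + 1/x) ^ (p+1) * x ^ (p+1) = (x+1)^(p+1) := by
      rw [← mul_pow]; congr 1; field_simp
    have h3 := mul_le_mul_of_nonneg_right hber (le_of_lt ha)
    rw [h2] at h3
    calc x ^ (p+1) + ((p+1:ℕ):ℝ) * x ^ p
        = (1 + ((p+1:ℕ):ℝ) * (1/x)) * x ^ (p+1) := by
          field_simp; ring
      _ ≤ (x+1)^(p+1) := h3
  rw [div_sub_div _ _ (ne_of_gt ha) (ne_of_gt hb), div_div, div_le_div_iff₀ (by positivity : (0:ℝ) < (x+1)^(p+1+1)) (by positivity)]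
  have key' : ((p+1:ℕ):ℝ) * x ^ p ≤ (x+1)^(p+1) - x^(p+1) := by linarith
  calc 1 * (x ^ (p+1) * (x+1)^(p+1) * ((p+1:ℕ):ℝ))
      = (((p+1:ℕ):ℝ) * x ^ p) * (x * (x+1)^(p+1)) := by rw [pow_succ x p]; ring
    _ ≤ ((x+1)^(p+1) - x^(p+1)) * ((x+1) * (x+1)^(p+1)) := by
        apply mul_le_mul key' _ (by positivity) (by nlinarith [pow_nonneg hx0.le p, (by positivity : (0:ℝ) ≤ ((p+1:ℕ):ℝ) * x ^ p)])
        have : x * (x+1)^(p+1) ≤ (x+1) * (x+1)^(p+1) := by nlinarith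
        exact this
    _ = (1 * (x+1)^(p+1) - x^(p+1) * 1) * (x+1)^(p+1+1) := by ring

lemma range_sum_bound (M : ℕ) (hM : 1 ≤ M) (m : ℕ) (hm : 1 ≤ m) (N : ℕ) :
    ∑ i ∈ Finset.range N, 1 / ((M:ℝ) + i) ^ (m+1)
      ≤ 1 / (M:ℝ) ^ (m+1) + (1 / (M:ℝ) ^ m) / m := by
  have hM1 : (1:ℝ) ≤ (M:ℝ) := by exact_mod_cast hM
  have hm0 : (0:ℝ) < (m:ℝ) := by exact_mod_cast hm
  set G : ℕ → ℝ := fun i => 1 / ((M:ℝ) + i) ^ m with hG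
  cases N with
  | zero => simp; positivity
  | succ N =>
    rw [Finset.sum_range_succ']
    have h0 : 1 / ((M:ℝ) + ((0:ℕ):ℝ)) ^ (m+1) = 1 / (M:ℝ) ^ (m+1) := by norm_num
    rw [h0]
    have hstep : ∑ i ∈ Finset.range N, 1 / ((M:ℝ) + ((i+1:ℕ):ℝ)) ^ (m+1)
        ≤ (1 / (M:ℝ) ^ m) / m := by
      have hle : ∀ i ∈ Finset.range N, 1 / ((M:ℝ) + ((i+1:ℕ):ℝ)) ^ (m+1)
          ≤ (G i - G (i+1)) / m := by
        intro i _
        have hx1 : (1:ℝ) ≤ (M:ℝ) + i := by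
          have : (0:ℝ) ≤ (i:ℝ) := Nat.cast_nonneg i
          linarith
        have := bern_step ((M:ℝ) + i) hx1 m hm
        have hcast : (M:ℝ) + ((i+1:ℕ):ℝ) = ((M:ℝ) + i) + 1 := by push_cast; ring
        have hcast2 : (M:ℝ) + ((i+1:ℕ):ℝ) = (M:ℝ) + ((i:ℝ)+1) := by push_cast; ring
        rw [hcast]
        simp only [hG]
        push_cast
        convert this using 4 <;> ring
      calc ∑ i ∈ Finset.range N, 1 / ((M:ℝ) + ((i+1:ℕ):ℝ)) ^ (m+1)
          ≤ ∑ i ∈ Finset.range N, (G i - G (i+1)) / m := Finset.sum_le_sum hle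
        _ = (∑ i ∈ Finset.range N, (G i - G (i+1))) / m := by rw [Finset.sum_div]
        _ = (G 0 - G N) / m := by rw [Finset.sum_range_sub' G]
        _ ≤ (1 / (M:ℝ) ^ m) / m := by
            have hGN : 0 ≤ G N := by simp only [hG]; positivity
            have hG0 : G 0 = 1 / (M:ℝ) ^ m := by simp [hG]
            have : G 0 - G N ≤ 1 / (M:ℝ) ^ m := by rw [hG0]; linarith
            gcongr
    linarith [hstep]

lemma tsum_tail_le (M : ℕ) (hM : 1 ≤ M) (m : ℕ) (hm : 1 ≤ m) :
    ∑' k : {k : ℕ // M ≤ k}, 1 / (k.1:ℝ) ^ (m+1)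
      ≤ 1 / (M:ℝ) ^ (m+1) + (1 / (M:ℝ) ^ m) / m := by
  let e : ℕ ≃ {k : ℕ // M ≤ k} :=
    { toFun := fun i => ⟨M + i, Nat.le_add_right M i⟩
      invFun := fun k => k.1 - M
      left_inv := fun i => by simp
      right_inv := fun k => by ext; simp [Nat.add_sub_cancel' k.2] }
  rw [← e.tsum_eq]
  have hsumN : Summable (fun k : ℕ => 1 / (k:ℝ) ^ (m+1)) :=
    Real.summable_one_div_nat_pow.mpr (by omega)
  have hsum : Summable (fun i : ℕ => 1 / ((M + i : ℕ):ℝ) ^ (m+1)) :=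
    hsumN.comp_injective (add_right_injective M)
  have heq : ∀ i : ℕ, (1 : ℝ) / (((e i).1 : ℕ):ℝ) ^ (m+1) = 1 / ((M:ℝ) + i) ^ (m+1) := by
    intro i
    show (1 : ℝ) / ((M + i : ℕ):ℝ) ^ (m+1) = _
    push_cast; ring
  calc ∑' i : ℕ, 1 / (((e i).1 : ℕ):ℝ) ^ (m+1)
      = ∑' i : ℕ, 1 / ((M:ℝ) + i) ^ (m+1) := by exact tsum_congr heq
    _ ≤ 1 / (M:ℝ) ^ (m+1) + (1 / (M:ℝ) ^ m) / m := by
        apply Summable.tsum_le_of_sum_le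
        · convert hsum using 2 with i
          push_cast; ring
        · intro F
          calc ∑ i ∈ F, 1 / ((M:ℝ) + i) ^ (m+1)
              ≤ ∑ i ∈ Finset.range ((F.sup id).succ), 1 / ((M:ℝ) + i) ^ (m+1) := by
                apply Finset.sum_le_sum_of_subset_of_nonneg (Finset.subset_range_sup_succ F)
                intro i _ _; positivity
            _ ≤ _ := range_sum_bound M hM m hm _

/-- Truncation error bound for the series defining V_n(t)
without prior weights.  For γ > 0, naturals t, n, M with n ≥ t + 2 and M ≥ 1,
`Σ_{k=M}^∞ k_(t) / ∏_{j=0}^{n-1} (γk + j)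
   ≤ γ^{-n} · ( M^{t-n} + M^{t-n+1} / (n − t − 1) )`,
where powers of M with negative integer exponents are real powers. -/
theorem mfm_truncation_bound (γ : ℝ) (hγ : 0 < γ) (t n M : ℕ)
    (hn : t + 2 ≤ n) (hM : 1 ≤ M) :
    (∑' k : {k : ℕ // M ≤ k},
      (Nat.descFactorial k.1 t : ℝ) / ∏ j ∈ Finset.range n, (γ * k.1 + j))
      ≤ γ ^ (-(n : ℤ)) *
        ((M : ℝ) ^ ((t : ℤ) - (n : ℤ))
          + (M : ℝ) ^ ((t : ℤ) - (n : ℤ) + 1) / ((n : ℝ) - (t : ℝ) - 1)) := by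
  set m := n - t - 1 with hm_def
  have hm1 : 1 ≤ m := by omega
  have hterm : ∀ k : {k : ℕ // M ≤ k},
      (Nat.descFactorial k.1 t : ℝ) / ∏ j ∈ Finset.range n, (γ * k.1 + j)
        ≤ γ ^ (-(n:ℤ)) * (1 / (k.1:ℝ) ^ (m+1)) := by
    intro k
    have hk1 : (1:ℝ) ≤ (k.1:ℝ) := by exact_mod_cast le_trans hM k.2
    have hkpos : (0:ℝ) < (k.1:ℝ) := by linarith
    have hnum : (Nat.descFactorial k.1 t : ℝ) ≤ (k.1:ℝ) ^ t := by
      exact_mod_cast Nat.descFactorial_le_pow k.1 t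
    have hden : γ ^ n * (k.1:ℝ) ^ n ≤ ∏ j ∈ Finset.range n, (γ * k.1 + j) := by
      calc γ ^ n * (k.1:ℝ) ^ n = ∏ _j ∈ Finset.range n, (γ * (k.1:ℝ)) := by
            rw [Finset.prod_const, Finset.card_range, mul_pow]
        _ ≤ ∏ j ∈ Finset.range n, (γ * (k.1:ℝ) + j) :=
            Finset.prod_le_prod (fun j _ => by positivity)
              (fun j _ => by
                have : (0:ℝ) ≤ (j:ℝ) := Nat.cast_nonneg j
                linarith)
    have hdpos : (0:ℝ) < γ ^ n * (k.1:ℝ) ^ n := by positivity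
    have h1 : (Nat.descFactorial k.1 t : ℝ) / ∏ j ∈ Finset.range n, (γ * k.1 + j)
        ≤ (k.1:ℝ) ^ t / (γ ^ n * (k.1:ℝ) ^ n) :=
      div_le_div₀ (by positivity) hnum hdpos hden
    have h2 : (k.1:ℝ) ^ t / (γ ^ n * (k.1:ℝ) ^ n) = γ ^ (-(n:ℤ)) * (1 / (k.1:ℝ) ^ (m+1)) := by
      rw [zpow_neg, zpow_natCast]
      have hsplit : (k.1:ℝ) ^ n = (k.1:ℝ) ^ t * (k.1:ℝ) ^ (m+1) := by
        rw [← pow_add]; congr 1; omega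
      rw [hsplit]
      field_simp
    linarith [h1, h2.ge, h2.le]
  have hsub : Summable (fun k : {k : ℕ // M ≤ k} => 1 / (k.1:ℝ) ^ (m+1)) := by
    have := (Real.summable_one_div_nat_pow (p := m+1)).mpr (by omega)
    exact this.subtype _
  have hsum_major : Summable (fun k : {k : ℕ // M ≤ k} =>
      γ ^ (-(n:ℤ)) * (1 / (k.1:ℝ) ^ (m+1))) := hsub.mul_left _
  have hsum_f : Summable (fun k : {k : ℕ // M ≤ k} =>
      (Nat.descFactorial k.1 t : ℝ) / ∏ j ∈ Finset.range n, (γ * k.1 + j)) := by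
    apply Summable.of_nonneg_of_le (fun k => by positivity) hterm hsum_major
  have hγn : (0:ℝ) ≤ γ ^ (-(n:ℤ)) := by positivity
  have hmr : ((m:ℕ):ℝ) = (n:ℝ) - (t:ℝ) - 1 := by
    have h : ((m:ℕ):ℤ) = (n:ℤ) - (t:ℤ) - 1 := by omega
    exact_mod_cast congrArg (Int.cast : ℤ → ℝ) h
  have hz1 : (M:ℝ) ^ ((t:ℤ) - (n:ℤ)) = 1 / (M:ℝ) ^ (m+1) := by
    have h : (t:ℤ) - (n:ℤ) = -((m+1:ℕ):ℤ) := by omega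
    rw [h, zpow_neg, zpow_natCast, one_div]
  have hz2 : (M:ℝ) ^ ((t:ℤ) - (n:ℤ) + 1) = 1 / (M:ℝ) ^ m := by
    have h : (t:ℤ) - (n:ℤ) + 1 = -((m:ℕ):ℤ) := by omega
    rw [h, zpow_neg, zpow_natCast, one_div]
  calc (∑' k : {k : ℕ // M ≤ k},
      (Nat.descFactorial k.1 t : ℝ) / ∏ j ∈ Finset.range n, (γ * k.1 + j))
      ≤ ∑' k : {k : ℕ // M ≤ k}, γ ^ (-(n:ℤ)) * (1 / (k.1:ℝ) ^ (m+1)) :=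
        Summable.tsum_le_tsum hterm hsum_f hsum_major
    _ = γ ^ (-(n:ℤ)) * ∑' k : {k : ℕ // M ≤ k}, 1 / (k.1:ℝ) ^ (m+1) := tsum_mul_left
    _ ≤ γ ^ (-(n:ℤ)) * (1 / (M:ℝ) ^ (m+1) + (1 / (M:ℝ) ^ m) / m) :=
        mul_le_mul_of_nonneg_left (tsum_tail_le M hM m hm1) hγn
    _ = γ ^ (-(n:ℤ)) * ((M:ℝ) ^ ((t:ℤ) - (n:ℤ))
          + (M:ℝ) ^ ((t:ℤ) - (n:ℤ) + 1) / ((n:ℝ) - (t:ℝ) - 1)) := by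
        rw [hz1, hz2, hmr]
end
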